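/- arXiv:2305.06317 — 8 statements merged into one kernel-verified Lean document; each statement's English description precedes it below -/
import Mathlib

section
/- Suppose the bilinear form a satisfies the continuity bound |a(w,v)| ≤ C_a ‖w‖₁ ‖v‖₁ for all w, v ∈ V, where C_a > 0. Then for all p, y, q, z ∈ V one has |B((p,y),(q,z))| ≤ max(C_a, 1) · (‖p‖_β² + ‖y‖_β²)^{1/2} · (‖q‖_β² + ‖z‖_β²)^{1/2}. -/
open RealInnerProductSpace

lemma cs4 (a1 a2 a3 a4 b1 b2 b3 b4 : ℝ)
    (h1 : 0 ≤ a1) (h2 : 0 ≤ a2) (h3 : 0 ≤ a3) (h4 : 0 ≤ a4)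
    (g1 : 0 ≤ b1) (g2 : 0 ≤ b2) (g3 : 0 ≤ b3) (g4 : 0 ≤ b4) :
    a1*b1 + a2*b2 + a3*b3 + a4*b4 ≤
      Real.sqrt (a1^2 + a2^2 + a3^2 + a4^2) * Real.sqrt (b1^2 + b2^2 + b3^2 + b4^2) := by
  rw [← Real.sqrt_mul (by positivity)]
  rw [show a1*b1 + a2*b2 + a3*b3 + a4*b4 =
    Real.sqrt ((a1*b1 + a2*b2 + a3*b3 + a4*b4)^2) from
      (Real.sqrt_sq (by positivity)).symm]
  apply Real.sqrt_le_sqrt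
  nlinarith [sq_nonneg (a1*b2 - a2*b1), sq_nonneg (a1*b3 - a3*b1), sq_nonneg (a1*b4 - a4*b1),
    sq_nonneg (a2*b3 - a3*b2), sq_nonneg (a2*b4 - a4*b2), sq_nonneg (a3*b4 - a4*b3)]

/-- Continuity of the saddle-point bilinear form `B` with respect to the β-weighted norm:
the abstract form of eq. (3.14). -/
theorem stmt0
    {V : Type*} [NormedAddCommGroup V] [InnerProductSpace ℝ V]
    (β : ℝ) (hβ : 0 < β)
    (a : V →ₗ[ℝ] V →ₗ[ℝ] ℝ) (n1 : Seminorm ℝ V)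
    (Ca : ℝ) (hCa : 0 < Ca)
    (hcont : ∀ w v : V, |a w v| ≤ Ca * n1 w * n1 v)
    (B : V × V → V × V → ℝ)
    (hB : ∀ p y q z : V, B (p, y) (q, z) =
      Real.sqrt β * a q p - ⟪y, q⟫ - ⟪p, z⟫ - Real.sqrt β * a y z)
    (nβ : V → ℝ)
    (hnβ : ∀ p : V, nβ p = Real.sqrt (Real.sqrt β * (n1 p) ^ 2 + ‖p‖ ^ 2)) :
    ∀ p y q z : V, |B (p, y) (q, z)| ≤
      max Ca 1 * Real.sqrt ((nβ p) ^ 2 + (nβ y) ^ 2) *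
        Real.sqrt ((nβ q) ^ 2 + (nβ z) ^ 2) := by
  intro p y q z
  set s := Real.sqrt β with hs
  have hs0 : 0 ≤ s := Real.sqrt_nonneg β
  set t := Real.sqrt s with ht
  have ht0 : 0 ≤ t := Real.sqrt_nonneg s
  have hts : t^2 = s := Real.sq_sqrt hs0
  set M := max Ca 1 with hM
  have hM0 : 0 ≤ M := le_trans zero_le_one (le_max_right _ _)
  have hMC : Ca ≤ M := le_max_left _ _
  have hM1 : (1:ℝ) ≤ M := le_max_right _ _
  -- nβ squared
  have hsq : ∀ v : V, (nβ v)^2 = (t * n1 v)^2 + ‖v‖^2 := by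
    intro v
    rw [hnβ v, Real.sq_sqrt (by positivity), mul_pow, hts]
  -- step 1: triangle inequality
  have step1 : |B (p, y) (q, z)| ≤
      s * |a q p| + ‖y‖ * ‖q‖ + ‖p‖ * ‖z‖ + s * |a y z| := by
    rw [hB]
    calc |s * a q p - ⟪y, q⟫ - ⟪p, z⟫ - s * a y z|
        ≤ |s * a q p| + |⟪y, q⟫| + |⟪p, z⟫| + |s * a y z| := by
          have := abs_sub (s * a q p - ⟪y, q⟫ - ⟪p, z⟫) (s * a y z)
          have h1 := abs_sub (s * a q p - ⟪y, q⟫) (⟪p, z⟫ : ℝ)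
          have h2 := abs_sub (s * a q p) (⟪y, q⟫ : ℝ)
          linarith
      _ ≤ s * |a q p| + ‖y‖ * ‖q‖ + ‖p‖ * ‖z‖ + s * |a y z| := by
          rw [abs_mul, abs_mul, abs_of_nonneg hs0]
          gcongr
          · exact abs_real_inner_le_norm y q
          · exact abs_real_inner_le_norm p z
  -- step 2: bound by M times sum
  have step2 : s * |a q p| + ‖y‖ * ‖q‖ + ‖p‖ * ‖z‖ + s * |a y z| ≤
      M * ((t * n1 p) * (t * n1 q) + ‖p‖ * ‖z‖ + (t * n1 y) * (t * n1 z) + ‖y‖ * ‖q‖) := by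
    have hqp := hcont q p
    have hyz := hcont y z
    have n1p := apply_nonneg n1 p
    have n1q := apply_nonneg n1 q
    have n1y := apply_nonneg n1 y
    have n1z := apply_nonneg n1 z
    have e1 : (t * n1 p) * (t * n1 q) = s * (n1 p * n1 q) := by ring_nf; rw [hts]; ring
    have e2 : (t * n1 y) * (t * n1 z) = s * (n1 y * n1 z) := by ring_nf; rw [hts]; ring
    rw [e1, e2]
    have b1 : s * |a q p| ≤ M * (s * (n1 p * n1 q)) := by
      calc s * |a q p| ≤ s * (Ca * n1 q * n1 p) := by
            apply mul_le_mul_of_nonneg_left hqp hs0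
        _ ≤ s * (M * n1 q * n1 p) := by
            apply mul_le_mul_of_nonneg_left _ hs0
            apply mul_le_mul_of_nonneg_right (mul_le_mul_of_nonneg_right hMC n1q) n1p
        _ = M * (s * (n1 p * n1 q)) := by ring
    have b2 : s * |a y z| ≤ M * (s * (n1 y * n1 z)) := by
      calc s * |a y z| ≤ s * (Ca * n1 y * n1 z) := by
            apply mul_le_mul_of_nonneg_left hyz hs0
        _ ≤ s * (M * n1 y * n1 z) := by
            apply mul_le_mul_of_nonneg_left _ hs0
            apply mul_le_mul_of_nonneg_right (mul_le_mul_of_nonneg_right hMC n1y) n1z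
        _ = M * (s * (n1 y * n1 z)) := by ring
    have b3 : ‖y‖ * ‖q‖ ≤ M * (‖y‖ * ‖q‖) := le_mul_of_one_le_left (by positivity) hM1
    have b4 : ‖p‖ * ‖z‖ ≤ M * (‖p‖ * ‖z‖) := le_mul_of_one_le_left (by positivity) hM1
    linarith
  -- step 3: Cauchy–Schwarz in ℝ⁴
  have step3 : (t * n1 p) * (t * n1 q) + ‖p‖ * ‖z‖ + (t * n1 y) * (t * n1 z) + ‖y‖ * ‖q‖ ≤
      Real.sqrt ((nβ p)^2 + (nβ y)^2) * Real.sqrt ((nβ q)^2 + (nβ z)^2) := by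
    have := cs4 (t * n1 p) ‖p‖ (t * n1 y) ‖y‖ (t * n1 q) ‖z‖ (t * n1 z) ‖q‖
      (by positivity) (norm_nonneg p) (by positivity) (norm_nonneg y)
      (by positivity) (norm_nonneg z) (by positivity) (norm_nonneg q)
    rw [hsq p, hsq y, hsq q, hsq z]
    calc (t * n1 p) * (t * n1 q) + ‖p‖ * ‖z‖ + (t * n1 y) * (t * n1 z) + ‖y‖ * ‖q‖
        = (t * n1 p)*(t * n1 q) + ‖p‖*‖z‖ + (t * n1 y)*(t * n1 z) + ‖y‖*‖q‖ := by ring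
      _ ≤ _ := this
      _ = Real.sqrt ((t * n1 p)^2 + ‖p‖^2 + ((t * n1 y)^2 + ‖y‖^2)) *
            Real.sqrt ((t * n1 q)^2 + ‖z‖^2 + ((t * n1 z)^2 + ‖q‖^2)) := by ring_nf
      _ = _ := by rw [show (t * n1 q)^2 + ‖z‖^2 + ((t * n1 z)^2 + ‖q‖^2) =
              (t * n1 q)^2 + ‖q‖^2 + ((t * n1 z)^2 + ‖z‖^2) by ring]
  calc |B (p, y) (q, z)| ≤ s * |a q p| + ‖y‖ * ‖q‖ + ‖p‖ * ‖z‖ + s * |a y z| := step1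
    _ ≤ M * ((t * n1 p) * (t * n1 q) + ‖p‖ * ‖z‖ + (t * n1 y) * (t * n1 z) + ‖y‖ * ‖q‖) := step2
    _ ≤ M * (Real.sqrt ((nβ p)^2 + (nβ y)^2) * Real.sqrt ((nβ q)^2 + (nβ z)^2)) :=
        mul_le_mul_of_nonneg_left step3 hM0
    _ = M * Real.sqrt ((nβ p)^2 + (nβ y)^2) * Real.sqrt ((nβ q)^2 + (nβ z)^2) := by ring
end

section
/- For all p, y ∈ V one has the identity B((p,y),(p−y,−y−p)) = β^{1/2} a(p,p) + β^{1/2} a(y,y) + ‖p‖² + ‖y‖². Consequently, if a is coercive, i.e., a(v,v) ≥ c_a ‖v‖₁² for all v ∈ V with c_a > 0, then B((p,y),(p−y,−y−p)) ≥ min(c_a, 1) · (‖p‖_β² + ‖y‖_β²). -/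
open RealInnerProductSpace

/-- The coercivity identity (3.15): `B((p,y),(p−y,−y−p)) = √β a(p,p) + √β a(y,y) + ‖p‖² + ‖y‖²`,
and the resulting coercivity bound when `a` is coercive. -/
theorem stmt1
    {V : Type*} [NormedAddCommGroup V] [InnerProductSpace ℝ V]
    (β : ℝ) (hβ : 0 < β)
    (a : V →ₗ[ℝ] V →ₗ[ℝ] ℝ) (n1 : Seminorm ℝ V)
    (ca : ℝ) (hca : 0 < ca)
    (hcoer : ∀ v : V, ca * (n1 v) ^ 2 ≤ a v v)
    (B : V × V → V × V → ℝ)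
    (hB : ∀ p y q z : V, B (p, y) (q, z) =
      Real.sqrt β * a q p - ⟪y, q⟫ - ⟪p, z⟫ - Real.sqrt β * a y z)
    (nβ : V → ℝ)
    (hnβ : ∀ p : V, nβ p = Real.sqrt (Real.sqrt β * (n1 p) ^ 2 + ‖p‖ ^ 2)) :
    (∀ p y : V, B (p, y) (p - y, -y - p) =
      Real.sqrt β * a p p + Real.sqrt β * a y y + ‖p‖ ^ 2 + ‖y‖ ^ 2) ∧
    (∀ p y : V, min ca 1 * ((nβ p) ^ 2 + (nβ y) ^ 2) ≤ B (p, y) (p - y, -y - p)) := by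
  have hid : ∀ p y : V, B (p, y) (p - y, -y - p) =
      Real.sqrt β * a p p + Real.sqrt β * a y y + ‖p‖ ^ 2 + ‖y‖ ^ 2 := by
    intro p y
    rw [hB]
    simp only [map_sub, map_neg, LinearMap.sub_apply, inner_sub_right, inner_neg_right,
      inner_sub_left, inner_neg_left]
    rw [real_inner_comm y p, ← real_inner_self_eq_norm_sq, ← real_inner_self_eq_norm_sq]
    ring
  refine ⟨hid, fun p y => ?_⟩
  rw [hid]
  have hsβ : 0 < Real.sqrt β := Real.sqrt_pos.mpr hβ
  have hsq : ∀ v : V, (nβ v) ^ 2 = Real.sqrt β * (n1 v) ^ 2 + ‖v‖ ^ 2 := by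
    intro v
    rw [hnβ, Real.sq_sqrt]
    positivity
  rw [hsq, hsq]
  have h1 := hcoer p
  have h2 := hcoer y
  have hm1 : min ca 1 ≤ ca := min_le_left _ _
  have hm2 : min ca 1 ≤ 1 := min_le_right _ _
  have hmpos : 0 < min ca 1 := lt_min hca one_pos
  nlinarith [sq_nonneg (n1 p), sq_nonneg (n1 y), sq_nonneg ‖p‖, sq_nonneg ‖y‖,
    mul_le_mul_of_nonneg_left h1 hsβ.le, mul_le_mul_of_nonneg_left h2 hsβ.le,
    mul_le_mul_of_nonneg_right hm1 (mul_nonneg hsβ.le (sq_nonneg (n1 p))),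
    mul_le_mul_of_nonneg_right hm1 (mul_nonneg hsβ.le (sq_nonneg (n1 y))),
    mul_le_mul_of_nonneg_right hm2 (sq_nonneg ‖p‖),
    mul_le_mul_of_nonneg_right hm2 (sq_nonneg ‖y‖)]
end

section
/- Assume a satisfies |a(w,v)| ≤ C_a ‖w‖₁ ‖v‖₁ and a(v,v) ≥ c_a ‖v‖₁² for all w, v ∈ V, where C_a, c_a > 0. Then for every (p,y) ∈ V × V one has (min(c_a,1)/4) · (‖p‖_β + ‖y‖_β) ≤ sup over (q,z) ≠ (0,0) of B((p,y),(q,z)) / (‖q‖_β + ‖z‖_β) ≤ max(C_a, 1) · (‖p‖_β + ‖y‖_β). -/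
open RealInnerProductSpace

lemma minkowski2 (u1 v1 u2 v2 : ℝ) :
    Real.sqrt ((u1+u2)^2 + (v1+v2)^2) ≤ Real.sqrt (u1^2+v1^2) + Real.sqrt (u2^2+v2^2) := by
  set s1 := Real.sqrt (u1^2+v1^2) with hs1d
  set s2 := Real.sqrt (u2^2+v2^2) with hs2d
  have hs1 : 0 ≤ s1 := Real.sqrt_nonneg _
  have hs2 : 0 ≤ s2 := Real.sqrt_nonneg _
  have hs1sq : s1^2 = u1^2+v1^2 := Real.sq_sqrt (by positivity)
  have hs2sq : s2^2 = u2^2+v2^2 := Real.sq_sqrt (by positivity)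
  have key : u1*u2 + v1*v2 ≤ s1*s2 := by
    nlinarith [sq_nonneg (u1*v2 - u2*v1), mul_nonneg hs1 hs2, sq_nonneg (s1*s2 - u1*u2 - v1*v2), sq_nonneg (s1*s2 + u1*u2 + v1*v2)]
  have : (u1+u2)^2 + (v1+v2)^2 ≤ (s1+s2)^2 := by nlinarith
  calc Real.sqrt ((u1+u2)^2 + (v1+v2)^2) ≤ Real.sqrt ((s1+s2)^2) := Real.sqrt_le_sqrt this
    _ = s1+s2 := Real.sqrt_sq (by positivity)

/-- The two-sided inf-sup stability estimate (Lemma 2.1 / eq. (3.18)) for the saddle-point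
bilinear form `B` with respect to the β-weighted norm. -/
theorem stmt2
    {V : Type*} [NormedAddCommGroup V] [InnerProductSpace ℝ V]
    (β : ℝ) (hβ : 0 < β)
    (a : V →ₗ[ℝ] V →ₗ[ℝ] ℝ) (n1 : Seminorm ℝ V)
    (Ca ca : ℝ) (hCa : 0 < Ca) (hca : 0 < ca)
    (hcont : ∀ w v : V, |a w v| ≤ Ca * n1 w * n1 v)
    (hcoer : ∀ v : V, ca * (n1 v) ^ 2 ≤ a v v)
    (B : V × V → V × V → ℝ)
    (hB : ∀ p y q z : V, B (p, y) (q, z) =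
      Real.sqrt β * a q p - ⟪y, q⟫ - ⟪p, z⟫ - Real.sqrt β * a y z)
    (nβ : V → ℝ)
    (hnβ : ∀ p : V, nβ p = Real.sqrt (Real.sqrt β * (n1 p) ^ 2 + ‖p‖ ^ 2)) :
    ∀ p y : V,
      min ca 1 / 4 * (nβ p + nβ y) ≤
        (⨆ w : {x : V × V // x ≠ 0}, B (p, y) w.1 / (nβ w.1.1 + nβ w.1.2)) ∧
      (⨆ w : {x : V × V // x ≠ 0}, B (p, y) w.1 / (nβ w.1.1 + nβ w.1.2)) ≤
        max Ca 1 * (nβ p + nβ y) := by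
  have hsβ : (0:ℝ) < Real.sqrt β := Real.sqrt_pos.2 hβ
  set s : ℝ := Real.sqrt (Real.sqrt β) with hsd
  have hs : 0 ≤ s := Real.sqrt_nonneg _
  have hss : s * s = Real.sqrt β := Real.mul_self_sqrt hsβ.le
  -- rewrite nβ using s
  have hnβ' : ∀ p : V, nβ p = Real.sqrt ((s * n1 p)^2 + ‖p‖^2) := by
    intro p
    rw [hnβ p]
    congr 1
    have h2 : s^2 = Real.sqrt β := by rw [sq, hss]
    rw [mul_pow, h2]
  have hnn : ∀ p : V, 0 ≤ nβ p := fun p => (hnβ p ▸ Real.sqrt_nonneg _)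
  have hsq : ∀ p : V, (nβ p)^2 = Real.sqrt β * (n1 p)^2 + ‖p‖^2 := by
    intro p; rw [hnβ p]; exact Real.sq_sqrt (by positivity)
  have hnorm_le : ∀ p : V, ‖p‖ ≤ nβ p := by
    intro p
    have h1 : ‖p‖^2 ≤ (nβ p)^2 := by rw [hsq p]; nlinarith [apply_nonneg n1 p, hsβ.le, sq_nonneg (n1 p)]
    exact le_of_pow_le_pow_left₀ two_ne_zero (hnn p) h1
  have hn1_le : ∀ p : V, s * n1 p ≤ nβ p := by
    intro p
    have h1 : (s * n1 p)^2 ≤ (nβ p)^2 := by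
      rw [hsq p, mul_pow, sq, hss]; nlinarith [sq_nonneg ‖p‖]
    exact le_of_pow_le_pow_left₀ two_ne_zero (hnn p) h1
  have htri : ∀ x y : V, nβ (x + y) ≤ nβ x + nβ y := by
    intro x y
    rw [hnβ' x, hnβ' y, hnβ' (x+y)]
    have h1 : s * n1 (x+y) ≤ s * n1 x + s * n1 y := by
      have := map_add_le_add n1 x y
      nlinarith [this]
    have h2 : ‖x + y‖ ≤ ‖x‖ + ‖y‖ := norm_add_le x y
    calc Real.sqrt ((s * n1 (x+y))^2 + ‖x+y‖^2)
        ≤ Real.sqrt ((s * n1 x + s * n1 y)^2 + (‖x‖+‖y‖)^2) := by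
          apply Real.sqrt_le_sqrt
          have ha : 0 ≤ s * n1 (x+y) := by positivity
          have hb : 0 ≤ ‖x+y‖ := norm_nonneg _
          have g1 := pow_le_pow_left₀ ha h1 2
          have g2 := pow_le_pow_left₀ hb h2 2
          linarith
      _ ≤ _ := minkowski2 _ _ _ _
  have hneg : ∀ x : V, nβ (-x) = nβ x := by
    intro x; rw [hnβ (-x), hnβ x, map_neg_eq_map, norm_neg]
  have h0 : nβ (0:V) = 0 := by
    rw [hnβ (0:V)]; simp
  -- per-element bound
  have hBle : ∀ q z : V, ∀ pp yy : V, B (pp, yy) (q, z) ≤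
      max Ca 1 * (nβ pp + nβ yy) * (nβ q + nβ z) := by
    intro q z pp yy
    rw [hB]
    have t1 : Real.sqrt β * a q pp ≤ Ca * (nβ q * nβ pp) := by
      have h1 : a q pp ≤ Ca * n1 q * n1 pp := (le_abs_self _).trans (hcont q pp)
      have h2 : s * n1 q ≤ nβ q := hn1_le q
      have h3 : s * n1 pp ≤ nβ pp := hn1_le pp
      have h4 : (s * n1 q) * (s * n1 pp) ≤ nβ q * nβ pp :=
        mul_le_mul h2 h3 (by positivity) (hnn q)
      calc Real.sqrt β * a q pp ≤ Real.sqrt β * (Ca * n1 q * n1 pp) := by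
            exact mul_le_mul_of_nonneg_left h1 hsβ.le
        _ = Ca * ((s * n1 q) * (s * n1 pp)) := by rw [← hss]; ring
        _ ≤ Ca * (nβ q * nβ pp) := by exact mul_le_mul_of_nonneg_left h4 hCa.le
    have t4 : Real.sqrt β * (- a yy z) ≤ Ca * (nβ yy * nβ z) := by
      have h1 : - a yy z ≤ Ca * n1 yy * n1 z := (neg_le_abs _).trans (hcont yy z)
      have h4 : (s * n1 yy) * (s * n1 z) ≤ nβ yy * nβ z :=
        mul_le_mul (hn1_le yy) (hn1_le z) (by positivity) (hnn yy)
      calc Real.sqrt β * (- a yy z) ≤ Real.sqrt β * (Ca * n1 yy * n1 z) := by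
            exact mul_le_mul_of_nonneg_left h1 hsβ.le
        _ = Ca * ((s * n1 yy) * (s * n1 z)) := by rw [← hss]; ring
        _ ≤ Ca * (nβ yy * nβ z) := mul_le_mul_of_nonneg_left h4 hCa.le
    have t2 : -⟪yy, q⟫ ≤ nβ yy * nβ q := by
      have := (neg_le_abs _).trans (abs_real_inner_le_norm yy q)
      calc -⟪yy, q⟫ ≤ ‖yy‖ * ‖q‖ := this
        _ ≤ nβ yy * nβ q := mul_le_mul (hnorm_le yy) (hnorm_le q) (norm_nonneg q) (hnn yy)
    have t3 : -⟪pp, z⟫ ≤ nβ pp * nβ z := by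
      have := (neg_le_abs _).trans (abs_real_inner_le_norm pp z)
      calc -⟪pp, z⟫ ≤ ‖pp‖ * ‖z‖ := this
        _ ≤ nβ pp * nβ z := mul_le_mul (hnorm_le pp) (hnorm_le z) (norm_nonneg z) (hnn pp)
    have hmax1 : Ca ≤ max Ca 1 := le_max_left _ _
    have hmax2 : (1:ℝ) ≤ max Ca 1 := le_max_right _ _
    nlinarith [mul_nonneg (hnn q) (hnn pp), mul_nonneg (hnn yy) (hnn z),
      mul_nonneg (hnn yy) (hnn q), mul_nonneg (hnn pp) (hnn z)]
  -- denominator positivity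
  have hden : ∀ w : {x : V × V // x ≠ 0}, 0 < nβ w.1.1 + nβ w.1.2 := by
    rintro ⟨⟨q, z⟩, hw⟩
    by_cases hq : q = 0
    · have hz : z ≠ 0 := by
        intro hz; exact hw (by simp [hq, hz, Prod.ext_iff])
      have : 0 < ‖z‖ := norm_pos_iff.2 hz
      have := this.trans_le (hnorm_le z)
      have := hnn q
      simpa using by linarith
    · have : 0 < ‖q‖ := norm_pos_iff.2 hq
      have := this.trans_le (hnorm_le q)
      have := hnn z
      simpa using by linarith
  intro p y
  -- boundedness of the range
  have hbdd : BddAbove (Set.range fun w : {x : V × V // x ≠ 0} =>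
      B (p, y) w.1 / (nβ w.1.1 + nβ w.1.2)) := by
    refine ⟨max Ca 1 * (nβ p + nβ y), ?_⟩
    rintro x ⟨w, rfl⟩
    rw [div_le_iff₀ (hden w)]
    have : B (p, y) (w.1.1, w.1.2) ≤ max Ca 1 * (nβ p + nβ y) * (nβ w.1.1 + nβ w.1.2) :=
      hBle w.1.1 w.1.2 p y
    simpa using this
  have hRHSnn : 0 ≤ max Ca 1 * (nβ p + nβ y) := by
    have := hnn p; have := hnn y
    have : (0:ℝ) ≤ nβ p + nβ y := by linarith
    positivity
  constructor
  · -- lower bound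
    by_cases hpy : (p, y) = (0 : V × V)
    · have hp : p = 0 := congrArg Prod.fst hpy
      have hy : y = 0 := congrArg Prod.snd hpy
      subst hp; subst hy
      rw [h0]
      simp only [add_zero, mul_zero]
      by_cases hne : Nonempty {x : V × V // x ≠ 0}
      · obtain ⟨w⟩ := hne
        have hBz : B ((0:V), (0:V)) (w.1.1, w.1.2) = 0 := by
          rw [hB]; simp
        have : (0:ℝ) = B ((0:V), (0:V)) w.1 / (nβ w.1.1 + nβ w.1.2) := by
          rw [show w.1 = (w.1.1, w.1.2) from rfl, hBz, zero_div]
        exact this.le.trans (le_ciSup hbdd w)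
      · have : IsEmpty {x : V × V // x ≠ 0} := not_nonempty_iff.mp hne
        rw [iSup_of_empty', Real.sSup_empty]
    · -- nonzero case: test function (p - y, -(y + p))
      have hne : ((p - y, -(y + p)) : V × V) ≠ 0 := by
        intro h
        have h1 : p - y = 0 := congrArg Prod.fst h
        have h2 : -(y + p) = 0 := congrArg Prod.snd h
        have hp : p = 0 := by
          have := neg_eq_zero.mp h2
          have : y = -p := by linear_combination (norm := abel_nf) this
          rw [this] at h1
          have : (2:ℝ) • p = 0 := by
            rw [two_smul]; linear_combination (norm := abel_nf) h1
          have := smul_eq_zero.mp this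
          rcases this with h | h
          · norm_num at h
          · exact h
        have hy : y = 0 := by
          rw [hp] at h2; simpa using h2
        exact hpy (by rw [hp, hy]; rfl)
      set w : {x : V × V // x ≠ 0} := ⟨(p - y, -(y + p)), hne⟩ with hwd
      -- value of B at test function
      have hBval : B (p, y) (p - y, -(y + p)) =
          Real.sqrt β * a p p + Real.sqrt β * a y y + ‖p‖^2 + ‖y‖^2 := by
        rw [hB]
        have e1 : a (p - y) p = a p p - a y p := by rw [map_sub]; rfl
        have e2 : (a y) (-(y + p)) = -(a y y) - a y p := by
          rw [map_neg, map_add]; ring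
        have e3 : ⟪y, p - y⟫ = ⟪y, p⟫ - ‖y‖^2 := by
          rw [inner_sub_right, real_inner_self_eq_norm_sq]
        have e4 : ⟪p, -(y + p)⟫ = -⟪p, y⟫ - ‖p‖^2 := by
          rw [inner_neg_right, inner_add_right, real_inner_self_eq_norm_sq]; ring
        have e5 : ⟪p, y⟫ = ⟪y, p⟫ := real_inner_comm y p
        rw [e1, e2, e3, e4, e5]; ring
      have hBnn : Real.sqrt β * a p p + Real.sqrt β * a y y + ‖p‖^2 + ‖y‖^2 ≥
          min ca 1 * ((nβ p)^2 + (nβ y)^2) := by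
        have c1 := hcoer p
        have c2 := hcoer y
        have m1 : min ca 1 ≤ ca := min_le_left _ _
        have m2 : min ca 1 ≤ (1:ℝ) := min_le_right _ _
        have m3 : 0 < min ca 1 := lt_min hca one_pos
        rw [hsq p, hsq y]
        nlinarith [mul_le_mul_of_nonneg_left c1 hsβ.le, mul_le_mul_of_nonneg_left c2 hsβ.le,
          sq_nonneg (n1 p), sq_nonneg (n1 y), sq_nonneg ‖p‖, sq_nonneg ‖y‖,
          mul_nonneg hsβ.le (sq_nonneg (n1 p)), mul_nonneg hsβ.le (sq_nonneg (n1 y))]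
      -- denominator bound
      have hd1 : nβ (p - y) ≤ nβ p + nβ y := by
        have := htri p (-y)
        rw [hneg y] at this
        simpa [sub_eq_add_neg] using this
      have hd2 : nβ (-(y + p)) ≤ nβ p + nβ y := by
        rw [hneg]
        have := htri y p
        linarith
      have hdenw : 0 < nβ (p - y) + nβ (-(y + p)) := hden w
      have hS : 0 < nβ p + nβ y := by
        rcases Prod.mk.injEq p y 0 0 ▸ hpy with h
        by_cases hp : p = 0
        · have hy : y ≠ 0 := by intro hy; exact hpy (by rw [hp, hy]; rfl)
          have := (norm_pos_iff.2 hy).trans_le (hnorm_le y)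
          have := hnn p; linarith
        · have := (norm_pos_iff.2 hp).trans_le (hnorm_le p)
          have := hnn y; linarith
      have hfinal : min ca 1 / 4 * (nβ p + nβ y) ≤
          B (p, y) (p - y, -(y + p)) / (nβ (p - y) + nβ (-(y + p))) := by
        rw [le_div_iff₀ hdenw, hBval]
        have m3 : 0 < min ca 1 := lt_min hca one_pos
        nlinarith [sq_nonneg (nβ p - nβ y), mul_le_mul_of_nonneg_left (add_le_add hd1 hd2)
          (mul_nonneg (by linarith : (0:ℝ) ≤ min ca 1 / 4) hS.le)]
      exact hfinal.trans (le_ciSup hbdd w)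
  · -- upper bound
    by_cases hne : Nonempty {x : V × V // x ≠ 0}
    · apply ciSup_le
      intro w
      rw [div_le_iff₀ (hden w)]
      have : B (p, y) (w.1.1, w.1.2) ≤ max Ca 1 * (nβ p + nβ y) * (nβ w.1.1 + nβ w.1.2) :=
        hBle w.1.1 w.1.2 p y
      simpa using this
    · have : IsEmpty {x : V × V // x ≠ 0} := not_nonempty_iff.mp hne
      rw [iSup_of_empty', Real.sSup_empty]
      exact hRHSnn
end

section
/- Assume a satisfies |a(w,v)| ≤ C_a ‖w‖₁ ‖v‖₁ and a(v,v) ≥ c_a ‖v‖₁² for all w, v ∈ V, where C_a, c_a > 0. Then for every (p,y) ∈ V × V one has (min(c_a,1)/4) · (‖p‖_β + ‖y‖_β) ≤ sup over (q,z) ≠ (0,0) of B((q,z),(p,y)) / (‖q‖_β + ‖z‖_β) ≤ max(C_a, 1) · (‖p‖_β + ‖y‖_β). In particular, for the lower bound the test pair (q,z) = (p−y, −p−y) satisfies B((p−y,−p−y),(p,y)) = β^{1/2} a(p,p) + β^{1/2} a(y,y) + ‖p‖² + ‖y‖². -/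
open RealInnerProductSpace

private lemma mink_aux (s A B C D : ℝ) (hs : 0 ≤ s) (hA : 0 ≤ A) (hB : 0 ≤ B)
    (hC : 0 ≤ C) (hD : 0 ≤ D) :
    Real.sqrt (s * (A + B) ^ 2 + (C + D) ^ 2) ≤
      Real.sqrt (s * A ^ 2 + C ^ 2) + Real.sqrt (s * B ^ 2 + D ^ 2) := by
  set u := Real.sqrt (s * A ^ 2 + C ^ 2) with hu
  set v := Real.sqrt (s * B ^ 2 + D ^ 2) with hv
  have hu0 : 0 ≤ u := Real.sqrt_nonneg _
  have hv0 : 0 ≤ v := Real.sqrt_nonneg _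
  have hu2 : u ^ 2 = s * A ^ 2 + C ^ 2 := Real.sq_sqrt (by positivity)
  have hv2 : v ^ 2 = s * B ^ 2 + D ^ 2 := Real.sq_sqrt (by positivity)
  have hx0 : 0 ≤ s * A * B + C * D := by positivity
  have h1 : (s * A * B + C * D) ^ 2 ≤ (u * v) ^ 2 := by
    rw [mul_pow, hu2, hv2]
    nlinarith [mul_nonneg hs (sq_nonneg (A * D - B * C))]
  have huv : s * A * B + C * D ≤ u * v := by
    nlinarith [mul_nonneg hu0 hv0]
  have h2 : s * (A + B) ^ 2 + (C + D) ^ 2 ≤ (u + v) ^ 2 := by nlinarith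
  calc Real.sqrt (s * (A + B) ^ 2 + (C + D) ^ 2) ≤ Real.sqrt ((u + v) ^ 2) :=
        Real.sqrt_le_sqrt h2
    _ = u + v := Real.sqrt_sq (by linarith)


private lemma coer_aux (m s ca A C E : ℝ) (hs : 0 ≤ s) (hmca : m ≤ ca)
    (hm1 : m ≤ 1) (hE : ca * A ^ 2 ≤ E) :
    m * (s * A ^ 2 + C ^ 2) ≤ s * E + C ^ 2 := by
  nlinarith [mul_le_mul_of_nonneg_left hE hs,
    mul_nonneg (sub_nonneg.mpr hmca) (mul_nonneg hs (sq_nonneg A)),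
    mul_nonneg (sub_nonneg.mpr hm1) (sq_nonneg C)]

private lemma final_aux (m SP SY d N : ℝ) (hm : 0 ≤ m) (hSP : 0 ≤ SP) (hSY : 0 ≤ SY)
    (hd2 : d ≤ 2 * (SP + SY)) (hN : m * (SP ^ 2 + SY ^ 2) ≤ N) :
    m / 4 * (SP + SY) * d ≤ N := by
  nlinarith [mul_nonneg (mul_nonneg hm (add_nonneg hSP hSY)) (sub_nonneg.mpr hd2),
    mul_nonneg hm (sq_nonneg (SP - SY))]

private lemma key_aux (M Ca NP NY NQ NZ X1 X2 X3 X4 : ℝ)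
    (hNP : 0 ≤ NP) (hNY : 0 ≤ NY) (hNQ : 0 ≤ NQ) (hNZ : 0 ≤ NZ)
    (hMCa : Ca ≤ M) (hM1 : 1 ≤ M)
    (t1 : X1 ≤ Ca * (NP * NQ)) (t2 : -X2 ≤ NZ * NP) (t3 : -X3 ≤ NQ * NY)
    (t4 : -X4 ≤ Ca * (NZ * NY)) :
    X1 - X2 - X3 - X4 ≤ M * ((NP + NY) * (NQ + NZ)) := by
  nlinarith [mul_nonneg (sub_nonneg.mpr hMCa) (mul_nonneg hNP hNQ),
    mul_nonneg (sub_nonneg.mpr hMCa) (mul_nonneg hNZ hNY),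
    mul_nonneg (sub_nonneg.mpr hM1) (mul_nonneg hNZ hNP),
    mul_nonneg (sub_nonneg.mpr hM1) (mul_nonneg hNQ hNY)]

set_option maxHeartbeats 1000000 in
/-- The dual two-sided inf-sup stability estimate (eq. (3.19)) for the saddle-point bilinear
form `B`, together with the identity for the test pair `(p−y, −p−y)`. -/
theorem stmt3
    {V : Type*} [NormedAddCommGroup V] [InnerProductSpace ℝ V]
    (β : ℝ) (hβ : 0 < β)
    (a : V →ₗ[ℝ] V →ₗ[ℝ] ℝ) (n1 : Seminorm ℝ V)
    (Ca ca : ℝ) (hCa : 0 < Ca) (hca : 0 < ca)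
    (hcont : ∀ w v : V, |a w v| ≤ Ca * n1 w * n1 v)
    (hcoer : ∀ v : V, ca * (n1 v) ^ 2 ≤ a v v)
    (B : V × V → V × V → ℝ)
    (hB : ∀ p y q z : V, B (p, y) (q, z) =
      Real.sqrt β * a q p - ⟪y, q⟫ - ⟪p, z⟫ - Real.sqrt β * a y z)
    (nβ : V → ℝ)
    (hnβ : ∀ p : V, nβ p = Real.sqrt (Real.sqrt β * (n1 p) ^ 2 + ‖p‖ ^ 2)) :
    ∀ p y : V,
      (min ca 1 / 4 * (nβ p + nβ y) ≤
        ⨆ w : {x : V × V // x ≠ 0}, B w.1 (p, y) / (nβ w.1.1 + nβ w.1.2)) ∧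
      ((⨆ w : {x : V × V // x ≠ 0}, B w.1 (p, y) / (nβ w.1.1 + nβ w.1.2)) ≤
        max Ca 1 * (nβ p + nβ y)) ∧
      B (p - y, -p - y) (p, y) =
        Real.sqrt β * a p p + Real.sqrt β * a y y + ‖p‖ ^ 2 + ‖y‖ ^ 2 := by
  intro p y
  have hs : 0 < Real.sqrt β := Real.sqrt_pos.mpr hβ
  set s : ℝ := Real.sqrt β with hsdef
  have hnn : ∀ x : V, 0 ≤ nβ x := fun x => (hnβ x) ▸ Real.sqrt_nonneg _
  have harg : ∀ x : V, 0 ≤ s * n1 x ^ 2 + ‖x‖ ^ 2 := fun x =>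
    add_nonneg (mul_nonneg hs.le (sq_nonneg _)) (sq_nonneg _)
  have hsq : ∀ x : V, nβ x ^ 2 = s * n1 x ^ 2 + ‖x‖ ^ 2 := fun x => by
    rw [hnβ x, Real.sq_sqrt (harg x)]
  have hnorm : ∀ x : V, ‖x‖ ≤ nβ x := fun x => by
    rw [hnβ x]
    calc ‖x‖ = Real.sqrt (‖x‖ ^ 2) := (Real.sqrt_sq (norm_nonneg x)).symm
      _ ≤ _ := Real.sqrt_le_sqrt (by nlinarith [mul_nonneg hs.le (sq_nonneg (n1 x))])
  have hsn1 : ∀ x : V, Real.sqrt s * n1 x ≤ nβ x := fun x => by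
    rw [hnβ x]
    calc Real.sqrt s * n1 x = Real.sqrt (s * n1 x ^ 2) := by
          rw [Real.sqrt_mul hs.le, Real.sqrt_sq (apply_nonneg n1 x)]
      _ ≤ _ := Real.sqrt_le_sqrt (by nlinarith [sq_nonneg ‖x‖])
  have hpos : ∀ x : V × V, x ≠ 0 → 0 < nβ x.1 + nβ x.2 := by
    intro x hx
    rcases x with ⟨q, z⟩
    by_contra h
    push_neg at h
    have hq : nβ q = 0 := le_antisymm (by nlinarith [hnn q, hnn z]) (hnn q)
    have hz : nβ z = 0 := le_antisymm (by nlinarith [hnn q, hnn z]) (hnn z)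
    have hq0 : q = 0 := norm_eq_zero.mp (le_antisymm (hq ▸ hnorm q) (norm_nonneg q))
    have hz0 : z = 0 := norm_eq_zero.mp (le_antisymm (hz ▸ hnorm z) (norm_nonneg z))
    exact hx (by simp [hq0, hz0, Prod.ext_iff])
  set M := max Ca 1 with hM
  have hM1 : (1 : ℝ) ≤ M := le_max_right _ _
  have hMCa : Ca ≤ M := le_max_left _ _
  -- pointwise upper bound
  have key : ∀ q z : V, B (q, z) (p, y) ≤ M * ((nβ p + nβ y) * (nβ q + nβ z)) := by
    intro q z
    rw [hB q z p y]
    have hprod : ∀ u v : V, s * (n1 u * n1 v) ≤ nβ u * nβ v := by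
      intro u v
      have h := mul_le_mul (hsn1 u) (hsn1 v)
        (mul_nonneg (Real.sqrt_nonneg s) (apply_nonneg n1 v)) (hnn u)
      calc s * (n1 u * n1 v) = (Real.sqrt s * n1 u) * (Real.sqrt s * n1 v) := by
            linear_combination (-(n1 u * n1 v)) * Real.mul_self_sqrt hs.le
        _ ≤ nβ u * nβ v := h
    have t1 : s * a p q ≤ Ca * (nβ p * nβ q) := by
      have h1 : a p q ≤ Ca * n1 p * n1 q := le_trans (le_abs_self _) (hcont p q)
      have h2 := hprod p q
      nlinarith [mul_le_mul_of_nonneg_left h1 hs.le, mul_nonneg hCa.le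
        (sub_nonneg.mpr h2)]
    have t4 : -(s * a z y) ≤ Ca * (nβ z * nβ y) := by
      have h1 : -(a z y) ≤ Ca * n1 z * n1 y := le_trans (neg_le_abs _) (hcont z y)
      have h2 := hprod z y
      nlinarith [mul_le_mul_of_nonneg_left h1 hs.le, mul_nonneg hCa.le
        (sub_nonneg.mpr h2)]
    have t2 : -⟪z, p⟫ ≤ nβ z * nβ p := by
      have h1 : -⟪z, p⟫ ≤ ‖z‖ * ‖p‖ := le_trans (neg_le_abs _) (abs_real_inner_le_norm z p)
      calc -⟪z, p⟫ ≤ ‖z‖ * ‖p‖ := h1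
        _ ≤ nβ z * nβ p := mul_le_mul (hnorm z) (hnorm p) (norm_nonneg p) (hnn z)
    have t3 : -⟪q, y⟫ ≤ nβ q * nβ y := by
      have h1 : -⟪q, y⟫ ≤ ‖q‖ * ‖y‖ := le_trans (neg_le_abs _) (abs_real_inner_le_norm q y)
      calc -⟪q, y⟫ ≤ ‖q‖ * ‖y‖ := h1
        _ ≤ nβ q * nβ y := mul_le_mul (hnorm q) (hnorm y) (norm_nonneg y) (hnn q)
    exact key_aux M Ca (nβ p) (nβ y) (nβ q) (nβ z) _ _ _ _
      (hnn p) (hnn y) (hnn q) (hnn z) hMCa hM1 t1 t2 t3 t4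
  have hub : ∀ w : {x : V × V // x ≠ 0},
      B w.1 (p, y) / (nβ w.1.1 + nβ w.1.2) ≤ M * (nβ p + nβ y) := by
    rintro ⟨⟨q, z⟩, hw⟩
    have hd := hpos (q, z) hw
    rw [div_le_iff₀ hd]
    calc B (q, z) (p, y) ≤ M * ((nβ p + nβ y) * (nβ q + nβ z)) := key q z
      _ = M * (nβ p + nβ y) * (nβ q + nβ z) := by ring
  have hbdd : BddAbove (Set.range fun w : {x : V × V // x ≠ 0} =>
      B w.1 (p, y) / (nβ w.1.1 + nβ w.1.2)) := by
    refine ⟨M * (nβ p + nβ y), ?_⟩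
    rintro x ⟨w, rfl⟩
    exact hub w
  -- the identity (part 3)
  have h3 : B (p - y, -p - y) (p, y) = s * a p p + s * a y y + ‖p‖ ^ 2 + ‖y‖ ^ 2 := by
    rw [hB (p - y) (-p - y) p y]
    have e1 : (a p) (p - y) = a p p - a p y := map_sub (a p) p y
    have e2 : (a (-p - y)) y = -(a p y) - a y y := by
      have : a (-p - y) = -(a p) - a y := by
        rw [map_sub a (-p) y, map_neg a p]
      rw [this]
      simp
    rw [e1, e2]
    have e3 : ⟪-p - y, p⟫ = -‖p‖ ^ 2 - ⟪p, y⟫ := by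
      rw [inner_sub_left, inner_neg_left, real_inner_self_eq_norm_sq,
        real_inner_comm y p]
    have e4 : ⟪p - y, y⟫ = ⟪p, y⟫ - ‖y‖ ^ 2 := by
      rw [inner_sub_left, real_inner_self_eq_norm_sq]
    rw [e3, e4]
    ring
  refine ⟨?_, ?_, h3⟩
  · -- lower bound
    by_cases hpy : (p, y) = (0 : V × V)
    · have hp : p = 0 := congrArg Prod.fst hpy
      have hy : y = 0 := congrArg Prod.snd hpy
      have hz : nβ (0 : V) = 0 := by rw [hnβ]; simp
      rw [hp, hy, hz]
      rw [add_zero, mul_zero]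
      rcases isEmpty_or_nonempty {x : V × V // x ≠ 0} with hE | hNE
      · rw [Real.iSup_of_isEmpty]
      · obtain ⟨w⟩ := hNE
        have hw0 : B w.1 ((0 : V), (0 : V)) / (nβ w.1.1 + nβ w.1.2) = 0 := by
          obtain ⟨⟨q, z⟩, hw⟩ := w
          rw [hB q z 0 0]; simp
        have hle := le_ciSup (f := fun w : {x : V × V // x ≠ 0} =>
          B w.1 ((0 : V), (0 : V)) / (nβ w.1.1 + nβ w.1.2)) (by
            rw [hp, hy] at hbdd; exact hbdd) w
        rw [hw0] at hle
        exact hle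
    · have hne : ((p - y, -p - y) : V × V) ≠ 0 := by
        intro h
        have h1 : p - y = 0 := congrArg Prod.fst h
        have h2 : -p - y = 0 := congrArg Prod.snd h
        have h4 : p + p = 0 := by
          calc p + p = (p - y) - (-p - y) := by abel
            _ = 0 - 0 := by rw [h1, h2]
            _ = 0 := by simp
        have hp0 : p = 0 := by
          have h5 : (2 : ℝ) • p = 0 := by rw [two_smul]; exact h4
          rcases smul_eq_zero.mp h5 with h6 | h6
          · norm_num at h6
          · exact h6
        have hy0 : y = 0 := by
          rw [hp0] at h1; simpa using h1.symm
        exact hpy (by simp [hp0, hy0, Prod.ext_iff])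
      set w0 : {x : V × V // x ≠ 0} := ⟨(p - y, -p - y), hne⟩ with hw0def
      have hS : 0 < nβ p + nβ y := hpos (p, y) hpy
      have hd : 0 < nβ (p - y) + nβ (-p - y) := hpos _ hne
      -- triangle inequalities for nβ
      have htri : ∀ u v : V, n1 u ≤ n1 p + n1 y → ‖u‖ ≤ ‖p‖ + ‖y‖ → nβ u ≤ nβ p + nβ y := by
        intro u v hn1 hnm
        rw [hnβ u, hnβ p, hnβ y]
        calc Real.sqrt (s * n1 u ^ 2 + ‖u‖ ^ 2)
            ≤ Real.sqrt (s * (n1 p + n1 y) ^ 2 + (‖p‖ + ‖y‖) ^ 2) := by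
              apply Real.sqrt_le_sqrt
              have h1 : n1 u ^ 2 ≤ (n1 p + n1 y) ^ 2 := by
                nlinarith [apply_nonneg n1 u]
              have h2 : ‖u‖ ^ 2 ≤ (‖p‖ + ‖y‖) ^ 2 := by
                nlinarith [norm_nonneg u]
              nlinarith [mul_le_mul_of_nonneg_left h1 hs.le]
          _ ≤ Real.sqrt (s * n1 p ^ 2 + ‖p‖ ^ 2) + Real.sqrt (s * n1 y ^ 2 + ‖y‖ ^ 2) :=
              mink_aux s (n1 p) (n1 y) ‖p‖ ‖y‖ hs.le (apply_nonneg n1 p)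
                (apply_nonneg n1 y) (norm_nonneg p) (norm_nonneg y)
      have htri1 : nβ (p - y) ≤ nβ p + nβ y := by
        apply htri (p - y) (p - y)
        · calc n1 (p - y) = n1 (p + -y) := by rw [sub_eq_add_neg]
            _ ≤ n1 p + n1 (-y) := map_add_le_add n1 p (-y)
            _ = n1 p + n1 y := by rw [map_neg_eq_map]
        · exact norm_sub_le p y
      have htri2 : nβ (-p - y) ≤ nβ p + nβ y := by
        apply htri (-p - y) (-p - y)
        · calc n1 (-p - y) = n1 (-p + -y) := by rw [sub_eq_add_neg]
            _ ≤ n1 (-p) + n1 (-y) := map_add_le_add n1 (-p) (-y)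
            _ = n1 p + n1 y := by rw [map_neg_eq_map, map_neg_eq_map]
        · calc ‖-p - y‖ ≤ ‖-p‖ + ‖y‖ := norm_sub_le (-p) y
            _ = ‖p‖ + ‖y‖ := by rw [norm_neg]
      have hm : 0 < min ca 1 := lt_min hca one_pos
      have hN : min ca 1 * (nβ p ^ 2 + nβ y ^ 2) ≤ B (p - y, -p - y) (p, y) := by
        rw [h3, hsq p, hsq y]
        have e1 := coer_aux (min ca 1) s ca (n1 p) ‖p‖ (a p p) hs.le
          (min_le_left ca 1) (min_le_right ca 1) (hcoer p)
        have e2 := coer_aux (min ca 1) s ca (n1 y) ‖y‖ (a y y) hs.le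
          (min_le_left ca 1) (min_le_right ca 1) (hcoer y)
        nlinarith [e1, e2]
      have hlow : min ca 1 / 4 * (nβ p + nβ y) ≤
          B w0.1 (p, y) / (nβ w0.1.1 + nβ w0.1.2) := by
        show min ca 1 / 4 * (nβ p + nβ y) ≤
          B (p - y, -p - y) (p, y) / (nβ (p - y) + nβ (-p - y))
        rw [le_div_iff₀ hd]
        have hd2 : nβ (p - y) + nβ (-p - y) ≤ 2 * (nβ p + nβ y) := by linarith
        exact final_aux (min ca 1) (nβ p) (nβ y) _ _ hm.le (hnn p) (hnn y) hd2 hN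
      exact le_trans hlow (le_ciSup hbdd w0)
  · -- upper bound
    rcases isEmpty_or_nonempty {x : V × V // x ≠ 0} with hE | hNE
    · rw [Real.iSup_of_isEmpty]
      exact mul_nonneg (le_trans zero_le_one hM1) (add_nonneg (hnn p) (hnn y))
    · exact ciSup_le hub
end

section
/- Let C : V → V be a symmetric positive-definite linear operator, write ‖x‖_C = ⟨Cx, x⟩^{1/2}, and let B : V → V be a linear operator. Suppose there are constants c₁, c₂ > 0 such that c₁ ‖x‖_C ≤ sup over w ≠ 0 of ⟨Bx, w⟩ / ‖w‖_C ≤ c₂ ‖x‖_C for all x ∈ V. Then c₁² ⟨Cx, x⟩ ≤ ⟨C⁻¹(Bx), Bx⟩ ≤ c₂² ⟨Cx, x⟩ for all x ∈ V; equivalently, c₁² ‖x‖_C² ≤ ⟨Bᵗ C⁻¹ B x, x⟩ ≤ c₂² ‖x‖_C², where Bᵗ is the adjoint of B with respect to ⟨·,·⟩. -/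
open RealInnerProductSpace

lemma cs_aux {V : Type*} [NormedAddCommGroup V] [InnerProductSpace ℝ V]
    (C : V →ₗ[ℝ] V)
    (hsym : ∀ v w : V, ⟪C v, w⟫ = ⟪v, C w⟫)
    (hnn : ∀ v : V, 0 ≤ ⟪C v, v⟫) (v w : V) :
    ⟪C v, w⟫ ^ 2 ≤ ⟪C v, v⟫ * ⟪C w, w⟫ := by
  have key : ∀ t : ℝ, 0 ≤ ⟪C w, w⟫ * (t * t) + (2 * ⟪C v, w⟫) * t + ⟪C v, v⟫ := by
    intro t
    have h := hnn (v + t • w)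
    have hcross : ⟪C w, v⟫ = ⟪C v, w⟫ := by
      rw [hsym, real_inner_comm]
    simp only [map_add, map_smul, inner_add_left, inner_add_right,
      real_inner_smul_left, real_inner_smul_right] at h
    rw [hcross] at h
    nlinarith [h]
  have hd := discrim_le_zero key
  rw [discrim] at hd
  nlinarith [hd]

/-- Abstract form of Lemma 4.1: under two-sided inf-sup stability of `B` with respect to the
norm induced by the SPD preconditioner `C`, the preconditioned normal operator `Bᵗ C⁻¹ B` is
spectrally equivalent to `C`. -/
theorem stmt5
    {V : Type*} [NormedAddCommGroup V] [InnerProductSpace ℝ V] [FiniteDimensional ℝ V]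
    (C : V →ₗ[ℝ] V)
    (hsym : ∀ v w : V, ⟪C v, w⟫ = ⟪v, C w⟫)
    (hpd : ∀ v : V, v ≠ 0 → 0 < ⟪C v, v⟫)
    (Cinv : V →ₗ[ℝ] V)
    (hCinv : ∀ v : V, C (Cinv v) = v) (hCinv' : ∀ v : V, Cinv (C v) = v)
    (B Bt : V →ₗ[ℝ] V)
    (hBt : ∀ v w : V, ⟪Bt v, w⟫ = ⟪v, B w⟫)
    (c₁ c₂ : ℝ) (hc₁ : 0 < c₁) (hc₂ : 0 < c₂)
    (hlow : ∀ x : V, c₁ * Real.sqrt ⟪C x, x⟫ ≤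
      ⨆ w : {w : V // w ≠ 0}, ⟪B x, (w : V)⟫ / Real.sqrt ⟪C (w : V), (w : V)⟫)
    (hup : ∀ x : V,
      (⨆ w : {w : V // w ≠ 0}, ⟪B x, (w : V)⟫ / Real.sqrt ⟪C (w : V), (w : V)⟫) ≤
        c₂ * Real.sqrt ⟪C x, x⟫) :
    ∀ x : V,
      (c₁ ^ 2 * ⟪C x, x⟫ ≤ ⟪Cinv (B x), B x⟫ ∧ ⟪Cinv (B x), B x⟫ ≤ c₂ ^ 2 * ⟪C x, x⟫) ∧
      (c₁ ^ 2 * ⟪C x, x⟫ ≤ ⟪Bt (Cinv (B x)), x⟫ ∧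
        ⟪Bt (Cinv (B x)), x⟫ ≤ c₂ ^ 2 * ⟪C x, x⟫) := by
  intro x
  have hnn : ∀ v : V, 0 ≤ ⟪C v, v⟫ := by
    intro v
    rcases eq_or_ne v 0 with h | h
    · simp [h]
    · exact (hpd v h).le
  -- main claim about ⟪Bt (Cinv (B x)), x⟫
  have hBtx : ⟪Bt (Cinv (B x)), x⟫ = ⟪Cinv (B x), B x⟫ := hBt _ _
  set y := B x with hy
  -- ⟪Cinv y, y⟫ expressed via C
  have hCy : ⟪C (Cinv y), Cinv y⟫ = ⟪Cinv y, y⟫ := by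
    rw [hsym, hCinv, real_inner_comm]
  have hNnn : 0 ≤ ⟪Cinv y, y⟫ := hCy ▸ hnn (Cinv y)
  set N := Real.sqrt ⟪Cinv y, y⟫ with hN
  have hN2 : N ^ 2 = ⟪Cinv y, y⟫ := Real.sq_sqrt hNnn
  have hNnn' : 0 ≤ N := Real.sqrt_nonneg _
  rcases subsingleton_or_nontrivial V with hV | hV
  · have hx0 : x = 0 := Subsingleton.elim _ _
    subst hx0
    have hy0 : y = 0 := Subsingleton.elim _ _
    rw [hBtx, hy0]
    simp
  obtain ⟨v0, hv0⟩ := exists_ne (0 : V)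
  haveI : Nonempty {w : V // w ≠ 0} := ⟨⟨v0, hv0⟩⟩
  -- per-term upper bound
  have hterm : ∀ w : {w : V // w ≠ 0},
      ⟪y, (w : V)⟫ / Real.sqrt ⟪C (w : V), (w : V)⟫ ≤ N := by
    rintro ⟨w, hw⟩
    have hCw : 0 < ⟪C w, w⟫ := hpd w hw
    have hcs := cs_aux C hsym hnn (Cinv y) w
    rw [hCy, hCinv] at hcs
    have habs : ⟪y, w⟫ ≤ N * Real.sqrt ⟪C w, w⟫ := by
      have h1 : ⟪y, w⟫ ≤ |⟪y, w⟫| := le_abs_self _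
      have h2 : |⟪y, w⟫| = Real.sqrt (⟪y, w⟫ ^ 2) := (Real.sqrt_sq_eq_abs _).symm
      have h3 : Real.sqrt (⟪y, w⟫ ^ 2) ≤ Real.sqrt (⟪Cinv y, y⟫ * ⟪C w, w⟫) :=
        Real.sqrt_le_sqrt hcs
      rw [Real.sqrt_mul hNnn] at h3
      linarith
    rw [div_le_iff₀ (Real.sqrt_pos.mpr hCw)]
    exact habs
  have hbdd : BddAbove (Set.range fun w : {w : V // w ≠ 0} =>
      ⟪y, (w : V)⟫ / Real.sqrt ⟪C (w : V), (w : V)⟫) := ⟨N, by rintro r ⟨w, rfl⟩; exact hterm w⟩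
  have hsup_le : (⨆ w : {w : V // w ≠ 0},
      ⟪y, (w : V)⟫ / Real.sqrt ⟪C (w : V), (w : V)⟫) ≤ N := ciSup_le hterm
  have hle_sup : N ≤ ⨆ w : {w : V // w ≠ 0},
      ⟪y, (w : V)⟫ / Real.sqrt ⟪C (w : V), (w : V)⟫ := by
    rcases eq_or_ne y 0 with hy0 | hy0
    · have : N = 0 := by simp [hN, hy0]
      rw [this]
      have := hlow x
      have hsq : 0 ≤ c₁ * Real.sqrt ⟪C x, x⟫ :=
        mul_nonneg hc₁.le (Real.sqrt_nonneg _)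
      exact le_trans hsq this
    · have hcy0 : Cinv y ≠ 0 := by
        intro h
        apply hy0
        rw [← hCinv y, h, map_zero]
      have hval : ⟪y, (Cinv y : V)⟫ / Real.sqrt ⟪C (Cinv y), Cinv y⟫ = N := by
        rw [hCy, real_inner_comm, ← hN]
        rcases eq_or_lt_of_le hNnn with h0 | h0
        · simp [hN, ← h0]
        · rw [← hN2]
          field_simp [Real.sqrt_pos.mpr h0]
      calc N = ⟪y, (Cinv y : V)⟫ / Real.sqrt ⟪C (Cinv y), Cinv y⟫ := hval.symm
        _ ≤ _ := le_ciSup hbdd (⟨Cinv y, hcy0⟩ : {w : V // w ≠ 0})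
  have hlo : c₁ * Real.sqrt ⟪C x, x⟫ ≤ N := le_trans (hlow x) hsup_le
  have hhi : N ≤ c₂ * Real.sqrt ⟪C x, x⟫ := le_trans hle_sup (hup x)
  have hsx : Real.sqrt ⟪C x, x⟫ ^ 2 = ⟪C x, x⟫ := Real.sq_sqrt (hnn x)
  have hsxnn : 0 ≤ Real.sqrt ⟪C x, x⟫ := Real.sqrt_nonneg _
  have h1 : c₁ ^ 2 * ⟪C x, x⟫ ≤ ⟪Cinv y, y⟫ := by
    have := mul_self_le_mul_self (mul_nonneg hc₁.le hsxnn) hlo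
    nlinarith [hsx, hN2]
  have h2 : ⟪Cinv y, y⟫ ≤ c₂ ^ 2 * ⟪C x, x⟫ := by
    have := mul_self_le_mul_self hNnn' hhi
    nlinarith [hsx, hN2]
  exact ⟨⟨h1, h2⟩, by rw [hBtx]; exact ⟨h1, h2⟩⟩
end

section
/- Let A : V → V be a symmetric positive semidefinite linear operator, let λ > 0 satisfy λ μ ≤ 1 for every eigenvalue μ of A, and set R = Id − λA. Then for every real s with 0 ≤ s ≤ 1, every integer m ≥ 1, and every v ∈ V, ⟨A(R^m v), R^m v⟩ ≤ λ^{−s} m^{−s} ⟨A^{1−s} v, v⟩, where A^{1−s} is the fractional power of A defined by the spectral theorem (with the convention A^0 = Id). -/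
open RealInnerProductSpace

private lemma stmt9_key (x : ℝ) (hx0 : 0 ≤ x) (hx1 : x ≤ 1)
    (s : ℝ) (hs0 : 0 ≤ s) (hs1 : s ≤ 1) (m : ℕ) (hm : 1 ≤ m) :
    x ^ s * (1 - x) ^ (2 * m) ≤ (m : ℝ) ^ (-s) := by
  have hm0 : (0:ℝ) < (m:ℝ) := by exact_mod_cast hm
  have hxe : 0 ≤ Real.exp (-((m:ℝ) * x)) := (Real.exp_pos _).le
  have h1 : (1 - x) ^ (2 * m) ≤ Real.exp (-((m:ℝ) * x)) := by
    calc (1 - x) ^ (2 * m) ≤ (1 - x) ^ m :=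
          pow_le_pow_of_le_one (by linarith) (by linarith) (by omega)
      _ ≤ Real.exp (-x) ^ m := by
          apply pow_le_pow_left₀ (by linarith)
          have := Real.add_one_le_exp (-x); linarith
      _ = Real.exp (-((m:ℝ) * x)) := by
          rw [← Real.exp_nat_mul]; ring_nf
  have h2 : Real.exp (-((m:ℝ) * x)) ≤ Real.exp (-((m:ℝ) * x)) ^ s := by
    have hle1 : Real.exp (-((m:ℝ) * x)) ≤ 1 := by
      rw [Real.exp_le_one_iff]
      nlinarith
    calc Real.exp (-((m:ℝ) * x)) = Real.exp (-((m:ℝ) * x)) ^ (1:ℝ) := (Real.rpow_one _).symm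
      _ ≤ _ := Real.rpow_le_rpow_of_exponent_ge (Real.exp_pos _) hle1 hs1
  have hbound : x * Real.exp (-((m:ℝ) * x)) ≤ ((m:ℝ))⁻¹ := by
    have ht : (m:ℝ) * x ≤ Real.exp ((m:ℝ) * x) := by
      have := Real.add_one_le_exp ((m:ℝ) * x); linarith
    have he : Real.exp ((m:ℝ) * x) * Real.exp (-((m:ℝ) * x)) = 1 := by
      rw [← Real.exp_add]; simp
    have key : (m:ℝ) * (x * Real.exp (-((m:ℝ) * x))) ≤ 1 := by
      nlinarith [Real.exp_pos (-((m:ℝ) * x))]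
    have : x * Real.exp (-((m:ℝ) * x))
        = ((m:ℝ))⁻¹ * ((m:ℝ) * (x * Real.exp (-((m:ℝ) * x)))) := by
      field_simp
    rw [this]
    calc ((m:ℝ))⁻¹ * ((m:ℝ) * (x * Real.exp (-((m:ℝ) * x)))) ≤ ((m:ℝ))⁻¹ * 1 :=
          mul_le_mul_of_nonneg_left key (inv_nonneg.mpr hm0.le)
      _ = ((m:ℝ))⁻¹ := by ring
  calc x ^ s * (1 - x) ^ (2 * m)
      ≤ x ^ s * Real.exp (-((m:ℝ) * x)) := by
        apply mul_le_mul_of_nonneg_left h1 (Real.rpow_nonneg hx0 s)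
    _ ≤ x ^ s * Real.exp (-((m:ℝ) * x)) ^ s :=
        mul_le_mul_of_nonneg_left h2 (Real.rpow_nonneg hx0 s)
    _ = (x * Real.exp (-((m:ℝ) * x))) ^ s := (Real.mul_rpow hx0 hxe).symm
    _ ≤ ((m:ℝ)⁻¹) ^ s := Real.rpow_le_rpow (mul_nonneg hx0 hxe) hbound hs0
    _ = (m:ℝ) ^ (-s) := by
        rw [Real.inv_rpow hm0.le, ← Real.rpow_neg hm0.le]

private lemma stmt9_pt (μ lam s : ℝ) (hμ : 0 ≤ μ) (hlam : 0 < lam)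
    (hlamμ : lam * μ ≤ 1) (hs0 : 0 ≤ s) (hs1 : s ≤ 1) (m : ℕ) (hm : 1 ≤ m) :
    μ * (1 - lam * μ) ^ (2 * m) ≤ lam ^ (-s) * (m : ℝ) ^ (-s) * μ ^ (1 - s) := by
  have hx0 : 0 ≤ lam * μ := mul_nonneg hlam.le hμ
  have hsplit : μ = μ ^ s * μ ^ (1 - s) := by
    rw [← Real.rpow_add' hμ (by norm_num)]
    simp
  have hμs : μ ^ s = lam ^ (-s) * (lam * μ) ^ s := by
    rw [Real.mul_rpow hlam.le hμ, ← mul_assoc, ← Real.rpow_add hlam]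
    simp
  calc μ * (1 - lam * μ) ^ (2 * m)
      = (μ ^ s * (1 - lam * μ) ^ (2 * m)) * μ ^ (1 - s) := by
        nth_rewrite 1 [hsplit]; ring
    _ = lam ^ (-s) * ((lam * μ) ^ s * (1 - lam * μ) ^ (2 * m)) * μ ^ (1 - s) := by
        rw [hμs]; ring
    _ ≤ lam ^ (-s) * (m : ℝ) ^ (-s) * μ ^ (1 - s) := by
        apply mul_le_mul_of_nonneg_right _ (Real.rpow_nonneg hμ _)
        apply mul_le_mul_of_nonneg_left _ (Real.rpow_nonneg hlam.le _)
        exact stmt9_key _ hx0 hlamμ s hs0 hs1 m hm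

/-- Abstract form of the second case of Lemma 4.5 (smoothing property): for a symmetric
positive semidefinite `A` given by its spectral decomposition `A (b i) = μ i • b i` with
respect to an orthonormal eigenbasis `b`, a damping factor `λ > 0` with `λ μ ≤ 1` for all
eigenvalues `μ`, and `R = Id − λA`, one has
`⟨A R^m v, R^m v⟩ ≤ λ^{−s} m^{−s} ⟨A^{1−s} v, v⟩`, where
`⟨A^{1−s} v, v⟩ = ∑ i, (μ i)^{1−s} ⟨v, b i⟩²` is the fractional power of `A` defined by the
spectral theorem (with the convention `A^0 = Id`, i.e. `0^0 = 1` for real powers). -/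
theorem stmt9
    {V : Type*} [NormedAddCommGroup V] [InnerProductSpace ℝ V] [FiniteDimensional ℝ V]
    {n : ℕ} (b : OrthonormalBasis (Fin n) ℝ V)
    (μ : Fin n → ℝ) (hμ : ∀ i, 0 ≤ μ i)
    (A : V →ₗ[ℝ] V) (hA : ∀ i, A (b i) = μ i • b i)
    (lam : ℝ) (hlam : 0 < lam) (hlamμ : ∀ i, lam * μ i ≤ 1)
    (R : V →ₗ[ℝ] V) (hR : ∀ v : V, R v = v - lam • A v)
    (s : ℝ) (hs0 : 0 ≤ s) (hs1 : s ≤ 1)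
    (m : ℕ) (hm : 1 ≤ m) :
    ∀ v : V, ⟪A ((R ^ m) v), (R ^ m) v⟫ ≤
      lam ^ (-s) * (m : ℝ) ^ (-s) * ∑ i, (μ i) ^ (1 - s) * ⟪v, b i⟫ ^ 2 := by
  -- A in coordinates
  have hAw : ∀ (w : V) (i : Fin n), ⟪A w, b i⟫ = μ i * ⟪w, b i⟫ := by
    intro w i
    conv_lhs => rw [← b.sum_repr w]
    rw [map_sum, sum_inner]
    have : ∀ j, ⟪b.repr w j • A (b j), b i⟫ = b.repr w j * μ j * ⟪b j, b i⟫ := by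
      intro j
      rw [hA j, real_inner_smul_left, real_inner_smul_left]; ring
    simp_rw [LinearMap.map_smul, this]
    rw [Finset.sum_eq_single i]
    · rw [real_inner_self_eq_norm_sq, b.orthonormal.1 i]
      simp [b.repr_apply_apply, real_inner_comm, mul_comm]
    · intro j _ hj; rw [b.orthonormal.2 hj]; ring
    · simp
  -- quadratic form in coordinates
  have hquad : ∀ w : V, ⟪A w, w⟫ = ∑ i, μ i * ⟪w, b i⟫ ^ 2 := by
    intro w
    nth_rewrite 2 [← b.sum_repr w]
    rw [inner_sum]
    refine Finset.sum_congr rfl fun i _ => ?_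
    rw [real_inner_smul_right, hAw, b.repr_apply_apply, real_inner_comm (b i) w]
    ring
  -- R in coordinates
  have hRw : ∀ (w : V) (i : Fin n), ⟪R w, b i⟫ = (1 - lam * μ i) * ⟪w, b i⟫ := by
    intro w i
    rw [hR, inner_sub_left, real_inner_smul_left, hAw]; ring
  have hRm : ∀ (k : ℕ) (w : V) (i : Fin n),
      ⟪(R ^ k) w, b i⟫ = (1 - lam * μ i) ^ k * ⟪w, b i⟫ := by
    intro k
    induction k with
    | zero => intro w i; simp
    | succ k ih =>
      intro w i
      have : (R ^ (k + 1)) w = (R ^ k) (R w) := by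
        rw [pow_succ]; rfl
      rw [this, ih, hRw]; ring
  intro v
  rw [hquad, Finset.mul_sum]
  apply Finset.sum_le_sum
  intro i _
  rw [hRm]
  have h1 : μ i * ((1 - lam * μ i) ^ m * ⟪v, b i⟫) ^ 2
      = μ i * (1 - lam * μ i) ^ (2 * m) * ⟪v, b i⟫ ^ 2 := by
    rw [mul_pow, ← pow_mul]; ring_nf
  rw [h1]
  have h2 := stmt9_pt (μ i) lam s (hμ i) hlam (hlamμ i) hs0 hs1 m hm
  calc μ i * (1 - lam * μ i) ^ (2 * m) * ⟪v, b i⟫ ^ 2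
      ≤ (lam ^ (-s) * (m : ℝ) ^ (-s) * μ i ^ (1 - s)) * ⟪v, b i⟫ ^ 2 :=
        mul_le_mul_of_nonneg_right h2 (sq_nonneg _)
    _ = lam ^ (-s) * (m : ℝ) ^ (-s) * (μ i ^ (1 - s) * ⟪v, b i⟫ ^ 2) := by ring
end

section
/- Let V be a finite-dimensional real normed space with norm ‖·‖, and let B : V × V → ℝ be a bilinear form for which there exist constants 0 < c ≤ C such that |B(x, y)| ≤ C ‖x‖ ‖y‖ for all x, y ∈ V, c ‖x‖ ≤ sup over y ≠ 0 of B(x, y)/‖y‖ for all x ∈ V, and c ‖y‖ ≤ sup over x ≠ 0 of B(x, y)/‖x‖ for all y ∈ V. Let T, T̃ : V → V be linear operators satisfying B(Tx, y) = B(x, T̃y) for all x, y ∈ V. Then the operator norms with respect to ‖·‖ satisfy (c/C) ‖T̃‖ ≤ ‖T‖ ≤ (C/c) ‖T̃‖. -/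
private lemma stmt12_aux
    {V : Type*} [NormedAddCommGroup V] [NormedSpace ℝ V]
    (B : V →ₗ[ℝ] V →ₗ[ℝ] ℝ)
    (c C : ℝ) (hc : 0 < c) (hcC : c ≤ C)
    (hbound : ∀ x y : V, |B x y| ≤ C * ‖x‖ * ‖y‖)
    (hinf1 : ∀ x : V, c * ‖x‖ ≤ ⨆ y : {y : V // y ≠ 0}, B x (y : V) / ‖(y : V)‖)
    (T Tt : V →L[ℝ] V)
    (hadj : ∀ x y : V, B (T x) y = B x (Tt y)) :
    ‖T‖ ≤ C / c * ‖Tt‖ := by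
  have hC : 0 < C := lt_of_lt_of_le hc hcC
  apply ContinuousLinearMap.opNorm_le_bound
  · positivity
  intro x
  have key : c * ‖T x‖ ≤ C * ‖Tt‖ * ‖x‖ := by
    refine (hinf1 (T x)).trans ?_
    by_cases hne : Nonempty {y : V // y ≠ 0}
    · apply ciSup_le
      rintro ⟨y, hy⟩
      have hy' : (0:ℝ) < ‖y‖ := norm_pos_iff.mpr hy
      rw [hadj]
      rw [div_le_iff₀ hy']
      calc B x (Tt y) ≤ |B x (Tt y)| := le_abs_self _
        _ ≤ C * ‖x‖ * ‖Tt y‖ := hbound x (Tt y)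
        _ ≤ C * ‖x‖ * (‖Tt‖ * ‖y‖) := by
            apply mul_le_mul_of_nonneg_left (Tt.le_opNorm y) (by positivity)
        _ = C * ‖Tt‖ * ‖x‖ * ‖y‖ := by ring
    · rw [iSup, Set.range_eq_empty_iff.mpr (not_nonempty_iff.mp hne), Real.sSup_empty]
      positivity
  calc ‖T x‖ = c * ‖T x‖ / c := by field_simp
    _ ≤ C * ‖Tt‖ * ‖x‖ / c := by apply div_le_div_of_nonneg_right key hc.le
    _ = C / c * ‖Tt‖ * ‖x‖ := by ring

/-- Abstract form of Lemma 6.2: for a bilinear form satisfying two-sided inf-sup conditions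
with respect to the norm, operators `T`, `T̃` that are adjoint to each other with respect to
the form have equivalent operator norms: `(c/C)‖T̃‖ ≤ ‖T‖ ≤ (C/c)‖T̃‖`. -/
theorem stmt12
    {V : Type*} [NormedAddCommGroup V] [NormedSpace ℝ V] [FiniteDimensional ℝ V]
    (B : V →ₗ[ℝ] V →ₗ[ℝ] ℝ)
    (c C : ℝ) (hc : 0 < c) (hcC : c ≤ C)
    (hbound : ∀ x y : V, |B x y| ≤ C * ‖x‖ * ‖y‖)
    (hinf1 : ∀ x : V, c * ‖x‖ ≤ ⨆ y : {y : V // y ≠ 0}, B x (y : V) / ‖(y : V)‖)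
    (hinf2 : ∀ y : V, c * ‖y‖ ≤ ⨆ x : {x : V // x ≠ 0}, B (x : V) y / ‖(x : V)‖)
    (T Tt : V →L[ℝ] V)
    (hadj : ∀ x y : V, B (T x) y = B x (Tt y)) :
    c / C * ‖Tt‖ ≤ ‖T‖ ∧ ‖T‖ ≤ C / c * ‖Tt‖ := by
  have hC : 0 < C := lt_of_lt_of_le hc hcC
  constructor
  · have h : ‖Tt‖ ≤ C / c * ‖T‖ := by
      refine stmt12_aux B.flip c C hc hcC (fun x y => ?_) hinf2 Tt T
        (fun x y => (hadj y x).symm)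
      simpa [mul_comm (‖x‖) (‖y‖), mul_assoc] using hbound y x
    calc c / C * ‖Tt‖ ≤ c / C * (C / c * ‖T‖) := by
          apply mul_le_mul_of_nonneg_left h (by positivity)
      _ = ‖T‖ := by field_simp
  · exact stmt12_aux B c C hc hcC hbound hinf1 T Tt hadj
end

section
/- Let A : V → V be a symmetric positive semidefinite linear operator, let λ > 0 satisfy λ μ ≤ 1 for every eigenvalue μ of A, and set R = Id − λA. Let Q : V → V be a linear operator and γ > 0 a constant such that the approximation property ‖(Id − Q)v‖ ≤ γ ⟨Av, v⟩^{1/2} holds for all v ∈ V. Then for every integer m ≥ 1 and every v ∈ V, ⟨A R^m (Id − Q)v, R^m (Id − Q)v⟩^{1/2} ≤ γ λ^{−1/2} m^{−1/2} ⟨Av, v⟩^{1/2}. -/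
/-!
In an orthonormal eigenbasis of `A`, the form `⟨A R^m w, R^m w⟩` weighs the squared coefficient
of `w` on an eigenvector with eigenvalue `μ` by `μ (1 - λμ)^{2m}`. With `x = λμ ∈ [0, 1]`,
Bernoulli's inequality gives `(1 - x)^n (1 + n x) ≤ (1 - x²)^n ≤ 1`, hence `x (1 - x)^n ≤ 1 / n`,
which yields the smoothing property `⟨A R^m w, R^m w⟩ ≤ ‖w‖² / (λ m)`. For `w = v - Q v` the
approximation property bounds `‖w‖` by `γ ⟨A v, v⟩^{1/2}`.
-/

open RealInnerProductSpace

theorem mul_one_sub_pow_le_one_div {x : ℝ} (hx0 : 0 ≤ x) (hx1 : x ≤ 1) {n : ℕ} (hn : n ≠ 0) :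
    x * (1 - x) ^ n ≤ 1 / n := by
  have hbernoulli : 1 + n * x ≤ (1 + x) ^ n := one_add_mul_le_pow (by linarith) n
  have hprod : (1 - x) ^ n * (1 + x) ^ n ≤ 1 := by
    rw [← mul_pow]
    exact pow_le_one₀ (by nlinarith) (by nlinarith)
  have hpow : 0 ≤ (1 - x) ^ n := pow_nonneg (by linarith) n
  rw [le_div_iff₀ (by positivity)]
  nlinarith [mul_le_mul_of_nonneg_left hbernoulli hpow]

theorem mul_sq_one_sub_mul_pow_le {lam μ : ℝ} (hlam : 0 < lam) (hμ0 : 0 ≤ μ)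
    (hμ1 : lam * μ ≤ 1) {m : ℕ} (hm : m ≠ 0) :
    μ * ((1 - lam * μ) ^ m) ^ 2 ≤ 1 / (lam * m) := by
  have hscalar := mul_one_sub_pow_le_one_div (mul_nonneg hlam.le hμ0) hμ1 (n := 2 * m) (by omega)
  have hm' : (0 : ℝ) < m := by exact_mod_cast Nat.pos_of_ne_zero hm
  calc μ * ((1 - lam * μ) ^ m) ^ 2 = lam⁻¹ * (lam * μ * (1 - lam * μ) ^ (2 * m)) := by
        field_simp; ring
    _ ≤ lam⁻¹ * (1 / (2 * m : ℕ)) := by gcongr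
    _ = 1 / (2 * (lam * m)) := by push_cast; field_simp
    _ ≤ 1 / (lam * m) := one_div_le_one_div_of_le (by positivity) (by linarith [mul_pos hlam hm'])

section Eigenbasis

variable {V : Type*} [NormedAddCommGroup V] [InnerProductSpace ℝ V] {A : V →ₗ[ℝ] V}

theorem LinearMap.IsSymmetric.inner_pow_one_sub_smul_apply (hA : A.IsSymmetric) {b : V} {μ : ℝ}
    (hb : A b = μ • b) (lam : ℝ) (k : ℕ) (x : V) :
    ⟪b, ((1 - lam • A) ^ k) x⟫ = (1 - lam * μ) ^ k * ⟪b, x⟫ := by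
  induction k with
  | zero => simp
  | succ k ih =>
    rw [pow_succ', Module.End.mul_apply, LinearMap.sub_apply, LinearMap.smul_apply,
      Module.End.one_apply, inner_sub_right, inner_smul_right, ← hA, hb, real_inner_smul_left,
      ih, pow_succ']
    ring

theorem LinearMap.IsSymmetric.inner_apply_self_eq_sum (hA : A.IsSymmetric) {ι : Type*}
    [Fintype ι] (b : OrthonormalBasis ι ℝ V) {μ : ι → ℝ} (hb : ∀ i, A (b i) = μ i • b i)
    (x : V) : ⟪A x, x⟫ = ∑ i, μ i * ⟪b i, x⟫ ^ 2 := by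
  rw [← b.sum_inner_mul_inner]
  refine Finset.sum_congr rfl fun i _ => ?_
  rw [hA, hb, real_inner_smul_right, real_inner_comm x]
  ring

theorem LinearMap.IsPositive.inner_apply_pow_one_sub_smul_le [FiniteDimensional ℝ V]
    (hA : A.IsPositive) {lam : ℝ} (hlam : 0 < lam)
    (hspec : ∀ (μ : ℝ) (v : V), v ≠ 0 → A v = μ • v → lam * μ ≤ 1) {m : ℕ} (hm : m ≠ 0)
    (x : V) :
    ⟪A (((1 - lam • A) ^ m) x), ((1 - lam • A) ^ m) x⟫ ≤ ‖x‖ ^ 2 / (lam * m) := by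
  have hsym := hA.isSymmetric
  let b := hsym.eigenvectorBasis rfl
  let μ := hsym.eigenvalues rfl
  have hb : ∀ i, A (b i) = μ i • b i := hsym.apply_eigenvectorBasis rfl
  rw [hsym.inner_apply_self_eq_sum b hb, ← b.sum_sq_inner_right, div_eq_mul_one_div,
    Finset.sum_mul]
  refine Finset.sum_le_sum fun i _ => ?_
  rw [hsym.inner_pow_one_sub_smul_apply (hb i), mul_pow, ← mul_assoc, mul_comm _ (1 / _)]
  gcongr
  exact mul_sq_one_sub_mul_pow_le hlam (hA.nonneg_eigenvalues rfl i)
    (hspec _ _ (b.orthonormal.ne_zero i) (hb i)) hm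

end Eigenbasis

theorem stmt13_general
    {V : Type*} [NormedAddCommGroup V] [InnerProductSpace ℝ V] [FiniteDimensional ℝ V]
    (A : V →ₗ[ℝ] V)
    (hsym : ∀ v w : V, ⟪A v, w⟫ = ⟪v, A w⟫)
    (hpsd : ∀ v : V, 0 ≤ ⟪A v, v⟫)
    (lam : ℝ) (hlam : 0 < lam)
    (hspec : ∀ (μ : ℝ) (v : V), v ≠ 0 → A v = μ • v → lam * μ ≤ 1)
    (R : V →ₗ[ℝ] V) (hR : ∀ v : V, R v = v - lam • A v)
    (Q : V →ₗ[ℝ] V) (γ : ℝ)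
    (happrox : ∀ v : V, ‖v - Q v‖ ≤ γ * Real.sqrt ⟪A v, v⟫) :
    ∀ (m : ℕ), 1 ≤ m → ∀ v : V,
      Real.sqrt ⟪A ((R ^ m) (v - Q v)), (R ^ m) (v - Q v)⟫ ≤
        γ * (Real.sqrt lam)⁻¹ * (Real.sqrt m)⁻¹ * Real.sqrt ⟪A v, v⟫ := by
  intro m hm v
  have hR' : R = 1 - lam • A := LinearMap.ext hR
  have hA : A.IsPositive := A.isPositive_iff.mpr ⟨hsym, hpsd⟩
  have hsmooth :=
    hA.inner_apply_pow_one_sub_smul_le hlam hspec (Nat.one_le_iff_ne_zero.mp hm) (v - Q v)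
  rw [← hR'] at hsmooth
  calc Real.sqrt ⟪A ((R ^ m) (v - Q v)), (R ^ m) (v - Q v)⟫
      ≤ Real.sqrt (‖v - Q v‖ ^ 2 / (lam * m)) := Real.sqrt_le_sqrt hsmooth
    _ = (Real.sqrt lam)⁻¹ * (Real.sqrt m)⁻¹ * ‖v - Q v‖ := by
        rw [Real.sqrt_div' _ (by positivity), Real.sqrt_sq (norm_nonneg _),
          Real.sqrt_mul hlam.le]
        ring
    _ ≤ (Real.sqrt lam)⁻¹ * (Real.sqrt m)⁻¹ * (γ * Real.sqrt ⟪A v, v⟫) := by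
        gcongr
        exact happrox v
    _ = γ * (Real.sqrt lam)⁻¹ * (Real.sqrt m)⁻¹ * Real.sqrt ⟪A v, v⟫ := by ring

/-- Abstract mechanism of the two-grid convergence estimate (Lemma 6.3): combining the
smoothing property of the damped Richardson smoother `R = Id − λA` with the approximation
property `‖(Id − Q)v‖ ≤ γ ⟨Av, v⟩^{1/2}` of the coarse-grid correction `Q` yields the
`O(m^{−1/2})` two-grid bound. -/
theorem stmt13
    {V : Type*} [NormedAddCommGroup V] [InnerProductSpace ℝ V] [FiniteDimensional ℝ V]
    (A : V →ₗ[ℝ] V)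
    (hsym : ∀ v w : V, ⟪A v, w⟫ = ⟪v, A w⟫)
    (hpsd : ∀ v : V, 0 ≤ ⟪A v, v⟫)
    (lam : ℝ) (hlam : 0 < lam)
    (hspec : ∀ (μ : ℝ) (v : V), v ≠ 0 → A v = μ • v → lam * μ ≤ 1)
    (R : V →ₗ[ℝ] V) (hR : ∀ v : V, R v = v - lam • A v)
    (Q : V →ₗ[ℝ] V) (γ : ℝ) (hγ : 0 < γ)
    (happrox : ∀ v : V, ‖v - Q v‖ ≤ γ * Real.sqrt ⟪A v, v⟫) :
    ∀ (m : ℕ), 1 ≤ m → ∀ v : V,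
      Real.sqrt ⟪A ((R ^ m) (v - Q v)), (R ^ m) (v - Q v)⟫ ≤
        γ * (Real.sqrt lam)⁻¹ * (Real.sqrt m)⁻¹ * Real.sqrt ⟪A v, v⟫ :=
  stmt13_general A hsym hpsd lam hlam hspec R hR Q γ happrox
end
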